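/- Let q ≥ 2, let n, m ≥ 1, let D ⊆ {1,…,n} and D_1 ⊆ {1,…,m} be nonempty. The subgraph of G(Z_q^n, D) induced on the connected component of the zero vector is isomorphic (as a graph) to the subgraph of G(Z_q^m, D_1) induced on the connected component of the zero vector if and only if D = D_1. -/

import Mathlib

/-!
Every `x` with `ω(x) ≤ k := max D` is reachable from `0`: if `ω(x) < k`, then `x + e_k` has weight
`k` and is adjacent to both `0` and `x`. Conversely the RT weight is an ultrametric, so no edge
leaves `{ω ≤ k}`. Extension by zero identifies this set with `Z_q^k`, preserving weights, so the
component of `0` is `G(Z_q^k, D)` and depends on `D` only.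

For the converse, an isomorphism preserves the degree of `0`. The neighbourhood of any `x` is
`x - {ω ∈ D}`, so every vertex has `#{ω ∈ D} = ∑_{d ∈ D} (q - 1) q^(d-1)` neighbours, and this
number determines `D` through its base-`q` expansion.
-/

/-- The Rosenbloom–Tsfasman weight of a vector in `Z_q^n`:
the largest (1-based) index `i` with `x i ≠ 0`, and `0` for the zero vector. -/
def rtWeight {q n : ℕ} (x : Fin n → ZMod q) : ℕ :=
  (Finset.univ.filter fun i => x i ≠ 0).sup fun i => i.val + 1

/-- The Rosenbloom–Tsfasman distance on `Z_q^n`: `ρ(x,y) = ω(x - y)`. -/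
def rtDist {q n : ℕ} (x y : Fin n → ZMod q) : ℕ := rtWeight (x - y)

/-- The distance graph `G(Z_q^n, D)`: distinct `x, y` are adjacent iff `ρ(x,y) ∈ D`. -/
def rtGraph (q n : ℕ) (D : Finset ℕ) : SimpleGraph (Fin n → ZMod q) :=
  SimpleGraph.fromRel fun x y => rtDist x y ∈ D

open Finset

section Weight

variable {q n : ℕ}

theorem rtWeight_le_iff {y : Fin n → ZMod q} {d : ℕ} :
    rtWeight y ≤ d ↔ ∀ i : Fin n, d ≤ i.val → y i = 0 := by
  simp only [rtWeight, Finset.sup_le_iff, mem_filter, mem_univ, true_and]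
  refine forall_congr' fun i => ⟨fun h hi => ?_, fun h hy => ?_⟩
  · by_contra hy
    have := h hy
    omega
  · by_contra hd
    exact hy (h (by omega))

theorem le_rtWeight {y : Fin n → ZMod q} {i : Fin n} (h : y i ≠ 0) : i.val + 1 ≤ rtWeight y :=
  Finset.le_sup (f := fun i : Fin n => i.val + 1) (by simpa using h)

theorem rtWeight_le (y : Fin n → ZMod q) : rtWeight y ≤ n :=
  rtWeight_le_iff.mpr fun i hi => absurd i.isLt (by omega)

@[simp]
theorem rtWeight_zero : rtWeight (0 : Fin n → ZMod q) = 0 :=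
  Nat.le_zero.mp (rtWeight_le_iff.mpr fun _ _ => rfl)

@[simp]
theorem rtWeight_neg (y : Fin n → ZMod q) : rtWeight (-y) = rtWeight y :=
  eq_of_forall_ge_iff fun d => by simp only [rtWeight_le_iff, Pi.neg_apply, neg_eq_zero]

theorem rtWeight_sub_le (x y : Fin n → ZMod q) :
    rtWeight (x - y) ≤ max (rtWeight x) (rtWeight y) :=
  rtWeight_le_iff.mpr fun i hi => by
    rw [Pi.sub_apply, rtWeight_le_iff.mp le_rfl i (le_of_max_le_left hi),
      rtWeight_le_iff.mp le_rfl i (le_of_max_le_right hi), sub_zero]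

theorem rtWeight_add_single {y : Fin n → ZMod q} {i : Fin n} {a : ZMod q}
    (hy : rtWeight y ≤ i.val) (ha : a ≠ 0) : rtWeight (y + Pi.single i a) = i.val + 1 := by
  refine le_antisymm (rtWeight_le_iff.mpr fun j hj => ?_) (le_rtWeight ?_)
  · rw [Pi.add_apply, rtWeight_le_iff.mp hy j (by omega),
      Pi.single_eq_of_ne (Fin.ne_of_gt (by omega)), add_zero]
  · rwa [Pi.add_apply, rtWeight_le_iff.mp hy i le_rfl, Pi.single_eq_same, zero_add]

end Weight

section ExtendByZero

variable {q k n : ℕ}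

theorem rtWeight_extendByZero (h : k ≤ n) (z : Fin k → ZMod q) :
    rtWeight (Function.ExtendByZero.hom (ZMod q) (Fin.castLE h) z) = rtWeight z := by
  refine eq_of_forall_ge_iff fun d => ?_
  simp only [rtWeight_le_iff, Function.ExtendByZero.hom_apply]
  refine ⟨fun hz j hj => ?_, fun hz i hi => ?_⟩
  · simpa [(Fin.castLE_injective h).extend_apply] using hz (Fin.castLE h j) hj
  · by_cases hi' : ∃ j, Fin.castLE h j = i
    · obtain ⟨j, rfl⟩ := hi'
      simpa [(Fin.castLE_injective h).extend_apply] using hz j hi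
    · rw [Function.extend_apply' _ _ _ hi', Pi.zero_apply]

theorem range_extendByZero_castLE (h : k ≤ n) :
    Set.range (Function.ExtendByZero.hom (ZMod q) (Fin.castLE h)) =
      {y : Fin n → ZMod q | rtWeight y ≤ k} := by
  ext y
  refine ⟨?_, fun hy => ⟨y ∘ Fin.castLE h, funext fun i => ?_⟩⟩
  · rintro ⟨z, rfl⟩
    exact (rtWeight_extendByZero h z).trans_le (rtWeight_le z)
  · rw [Function.ExtendByZero.hom_apply]
    by_cases hi : ∃ j, Fin.castLE h j = i
    · obtain ⟨j, rfl⟩ := hi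
      exact (Fin.castLE_injective h).extend_apply _ _ j
    · rw [Function.extend_apply' _ _ _ hi, Pi.zero_apply,
        rtWeight_le_iff.mp hy i (not_lt.mp fun hik => hi ⟨⟨i, hik⟩, rfl⟩)]

theorem extendByZero_castLE_injective (h : k ≤ n) :
    Function.Injective (Function.ExtendByZero.hom (ZMod q) (Fin.castLE h)) :=
  Function.extend_injective (Fin.castLE_injective h) 0

theorem card_rtWeight_le [NeZero q] (h : k ≤ n) :
    #{y : Fin n → ZMod q | rtWeight y ≤ k} = q ^ k := by
  rw [← Fintype.card_subtype, ← Nat.card_eq_fintype_card, ← Set.coe_ofPred,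
    ← range_extendByZero_castLE h, Nat.card_range_of_injective (extendByZero_castLE_injective h),
    Nat.card_fun, Nat.card_zmod, Nat.card_fin]

theorem card_rtWeight_eq_succ [NeZero q] {e : ℕ} (he : e < n) :
    #{y : Fin n → ZMod q | rtWeight y = e + 1} = (q - 1) * q ^ e := by
  have hsplit : univ.filter (fun y : Fin n → ZMod q => rtWeight y ≤ e + 1) =
      univ.filter (rtWeight · ≤ e) ∪ univ.filter (rtWeight · = e + 1) := by
    ext y
    simp only [mem_filter, mem_univ, true_and, mem_union]
    omega
  have hdisj : Disjoint (univ.filter fun y : Fin n → ZMod q => rtWeight y ≤ e)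
      (univ.filter (rtWeight · = e + 1)) :=
    disjoint_filter.mpr fun y _ h1 h2 => by omega
  have hcard := card_union_of_disjoint hdisj
  rw [← hsplit, card_rtWeight_le he, card_rtWeight_le he.le] at hcard
  rw [Nat.sub_one_mul, ← pow_succ', hcard, Nat.add_sub_cancel_left]

theorem card_rtWeight_mem [NeZero q] {D : Finset ℕ} (hD : D ⊆ Icc 1 n) :
    q * #{y : Fin n → ZMod q | rtWeight y ∈ D} = (q - 1) * ∑ d ∈ D, q ^ d := by
  rw [← sum_card_fiberwise_eq_card_filter, mul_sum, mul_sum]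
  refine sum_congr rfl fun d hd => ?_
  obtain ⟨hd₁, hdn⟩ := mem_Icc.mp (hD hd)
  obtain ⟨e, rfl⟩ : ∃ e, d = e + 1 := ⟨d - 1, by omega⟩
  rw [card_rtWeight_eq_succ (by omega)]
  ring

noncomputable def rtGraphEmbedding (q : ℕ) (D : Finset ℕ) (h : k ≤ n) :
    rtGraph q k D ↪g rtGraph q n D where
  toEmbedding := ⟨_, extendByZero_castLE_injective h⟩
  map_rel_iff' {x y} := by
    simp only [rtGraph, SimpleGraph.fromRel_adj, rtDist, Function.Embedding.coeFn_mk, ← map_sub,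
      rtWeight_extendByZero, (extendByZero_castLE_injective h).ne_iff]

end ExtendByZero

theorem SimpleGraph.natCard_neighborSet_induce_reachable {V : Type*} (G : SimpleGraph V) {u : V}
    (v : {y | G.Reachable u y}) :
    Nat.card ((G.induce {y | G.Reachable u y}).neighborSet v) = Nat.card (G.neighborSet v) := by
  rw [SimpleGraph.neighborSet_induce]
  refine Nat.card_preimage_of_injective Subtype.val_injective ?_
  rw [Subtype.range_coe]
  exact fun w hw => v.2.trans (SimpleGraph.Adj.reachable hw)

section RtGraph

variable {q n : ℕ} {D : Finset ℕ}

theorem rtGraph_adj (hD : 0 ∉ D) {x y : Fin n → ZMod q} :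
    (rtGraph q n D).Adj x y ↔ rtWeight (x - y) ∈ D := by
  rw [rtGraph, SimpleGraph.fromRel_adj, rtDist, rtDist, ← neg_sub x y, rtWeight_neg, or_self,
    and_iff_right_iff_imp]
  rintro hxy rfl
  exact hD (by simpa using hxy)

theorem rtGraph_reachable_zero_iff [Fact (1 < q)] (hD : D ⊆ Icc 1 n) {y : Fin n → ZMod q} :
    (rtGraph q n D).Reachable 0 y ↔ rtWeight y ≤ D.sup id := by
  have h0 : 0 ∉ D := fun h => by simpa using hD h
  constructor
  · rintro ⟨p⟩
    suffices ∀ {x y : Fin n → ZMod q}, (rtGraph q n D).Walk x y →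
        rtWeight x ≤ D.sup id → rtWeight y ≤ D.sup id by
      exact this p (by simp)
    intro x y p
    induction p with
    | nil => exact id
    | @cons u v _ hadj _ ih =>
      refine fun hx => ih ?_
      have huv : rtWeight (u - v) ≤ D.sup id := le_sup (f := id) ((rtGraph_adj h0).mp hadj)
      simpa using (rtWeight_sub_le u (u - v)).trans (max_le hx huv)
  · intro hy
    rcases D.eq_empty_or_nonempty with rfl | hne
    · obtain rfl : y = 0 := funext fun i => rtWeight_le_iff.mp hy i (Nat.zero_le _)
      rfl
    obtain ⟨k, hk, hkD⟩ := exists_mem_eq_sup D hne id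
    obtain ⟨hk₁, hkn⟩ := mem_Icc.mp (hD hk)
    rw [hkD, id_eq] at hy
    rcases hy.lt_or_eq with hlt | heq
    · set e : Fin n → ZMod q := Pi.single ⟨k - 1, by omega⟩ 1
      have hw : rtWeight (y + e) = k := by
        rw [rtWeight_add_single (by rw [Fin.val_mk]; omega) one_ne_zero, Fin.val_mk]
        omega
      have h1 : (rtGraph q n D).Adj 0 (y + e) := by
        rwa [rtGraph_adj h0, zero_sub, rtWeight_neg, hw]
      have h2 : (rtGraph q n D).Adj (y + e) y := by
        rwa [rtGraph_adj h0, add_sub_cancel_left, ← zero_add e,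
          rtWeight_add_single (by simp) one_ne_zero, Fin.val_mk, Nat.sub_add_cancel hk₁]
      exact h1.reachable.trans h2.reachable
    · exact SimpleGraph.Adj.reachable ((rtGraph_adj h0).mpr (by rwa [zero_sub, rtWeight_neg, heq]))

theorem nonempty_rtGraph_induce_reachable_zero_iso [Fact (1 < q)] (hD : D ⊆ Icc 1 n) :
    Nonempty ((rtGraph q n D).induce {y | (rtGraph q n D).Reachable 0 y} ≃g
      rtGraph q (D.sup id) D) := by
  have hk : D.sup id ≤ n := Finset.sup_le fun d hd => (mem_Icc.mp (hD hd)).2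
  have hrange : {y | (rtGraph q n D).Reachable 0 y} = Set.range (rtGraphEmbedding q D hk) := by
    ext y
    rw [Set.mem_ofPred_eq, rtGraph_reachable_zero_iff hD]
    exact (Set.ext_iff.mp (range_extendByZero_castLE hk) y).symm
  rw [hrange]
  exact ⟨(rtGraphEmbedding q D hk).isoInduceRange.symm⟩

theorem natCard_neighborSet_rtGraph [NeZero q] (hD : D ⊆ Icc 1 n) (x : Fin n → ZMod q) :
    q * Nat.card ((rtGraph q n D).neighborSet x) = (q - 1) * ∑ d ∈ D, q ^ d := by
  have h0 : 0 ∉ D := fun h => by simpa using hD h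
  rw [← card_rtWeight_mem hD, ← Fintype.card_subtype, ← Nat.card_eq_fintype_card]
  exact congrArg (q * ·) (Nat.card_congr ((Equiv.subLeft x).subtypeEquiv fun _ => rtGraph_adj h0))

end RtGraph

theorem rtGraph_component_iso_iff_general (q n m : ℕ) (hq : 2 ≤ q)
    (D D₁ : Finset ℕ) (hD : D ⊆ Finset.Icc 1 n) (hD₁ : D₁ ⊆ Finset.Icc 1 m) :
    Nonempty
      (((rtGraph q n D).induce {y | (rtGraph q n D).Reachable 0 y}) ≃g
        ((rtGraph q m D₁).induce {y | (rtGraph q m D₁).Reachable 0 y})) ↔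
      D = D₁ := by
  have : Fact (1 < q) := ⟨hq⟩
  constructor
  · rintro ⟨f⟩
    have hdeg := Nat.card_congr (f.mapNeighborSet ⟨0, .refl 0⟩)
    rw [SimpleGraph.natCard_neighborSet_induce_reachable,
      SimpleGraph.natCard_neighborSet_induce_reachable] at hdeg
    refine Finset.geomSum_injective hq (Nat.eq_of_mul_eq_mul_left (by omega : 0 < q - 1) ?_)
    rw [← natCard_neighborSet_rtGraph hD, ← natCard_neighborSet_rtGraph hD₁, hdeg]
  · rintro rfl
    obtain ⟨e⟩ := nonempty_rtGraph_induce_reachable_zero_iso (q := q) hD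
    obtain ⟨e₁⟩ := nonempty_rtGraph_induce_reachable_zero_iso (q := q) hD₁
    exact ⟨e.trans e₁.symm⟩

/-- The component of the zero vector in `G(Z_q^n, D)` is isomorphic to the component of
the zero vector in `G(Z_q^m, D₁)` iff `D = D₁`. -/
theorem rtGraph_component_iso_iff (q n m : ℕ) (hq : 2 ≤ q) (hn : 1 ≤ n) (hm : 1 ≤ m)
    (D D₁ : Finset ℕ) (hD : D ⊆ Finset.Icc 1 n) (hD₁ : D₁ ⊆ Finset.Icc 1 m)
    (hDne : D.Nonempty) (hD₁ne : D₁.Nonempty) :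
    Nonempty
      (((rtGraph q n D).induce {y | (rtGraph q n D).Reachable 0 y}) ≃g
        ((rtGraph q m D₁).induce {y | (rtGraph q m D₁).Reachable 0 y})) ↔
      D = D₁ :=
  rtGraph_component_iso_iff_general q n m hq D D₁ hD hD₁
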